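/- arXiv:1205.0712 — 7 statements merged into one kernel-verified Lean document; each statement's English description precedes it below -/
import Mathlib

section
/- Let A be a set of parameters, f : A → A, and for each a ∈ A let W0(·,a), W1p(·,a) be differentiable real functions on an interval I, with W1m(x,a) := W1p(x,f(a)), and W(x,a) := W0(x,a) + W1p(x,a) - W1m(x,a). Suppose W0 satisfies the shape invariance condition W0(x,a)² - W0(x,f(a))² + ∂ₓW0(x,f(a)) + ∂ₓW0(x,a) = R(f(a)) for all x ∈ I, a ∈ A. If there exists a function ε : I → ℝ such that for all a ∈ A and x ∈ I: W1p(x,a)² + ∂ₓW1p(x,a) + W1m(x,a)² + ∂ₓW1m(x,a) - 2·W0(x,a)·W1m(x,a) + 2·W0(x,a)·W1p(x,a) - 2·W1m(x,a)·W1p(x,a) = ε(x), then W satisfies the same shape invariance condition: W(x,a)² - W(x,f(a))² + ∂ₓW(x,f(a)) + ∂ₓW(x,a) = R(f(a)) for all x ∈ I, a ∈ A. -/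
/-!
Write `W a = W0 a + W1p a - W1p (f a)`. Expanding the shape invariance expression of `W` at `a`
leaves that of `W0` plus `C a - C (f a)`, where `C a x` is the left-hand side of the
compatibility condition; this difference vanishes because `C a x = ε x` does not depend on `a`.
-/

section

variable {A : Type*}

def ShapeInvariant (I : Set ℝ) (f : A → A) (R : A → ℝ) (W : A → ℝ → ℝ) : Prop :=
  ∀ a, ∀ x ∈ I, W a x ^ 2 - W (f a) x ^ 2 + deriv (W (f a)) x + deriv (W a) x = R (f a)

def GeneralizedCompatible (I : Set ℝ) (f : A → A) (W0 W1p : A → ℝ → ℝ) : Prop :=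
  ∃ ε : ℝ → ℝ, ∀ a, ∀ x ∈ I,
    W1p a x ^ 2 + deriv (W1p a) x + W1p (f a) x ^ 2 + deriv (W1p (f a)) x
      - 2 * W0 a x * W1p (f a) x + 2 * W0 a x * W1p a x
      - 2 * W1p (f a) x * W1p a x = ε x

end

theorem deriv_fun_add_sub {𝕜 F : Type*} [NontriviallyNormedField 𝕜] [NormedAddCommGroup F]
    [NormedSpace 𝕜 F] {u v w : 𝕜 → F} {x : 𝕜} (hu : DifferentiableAt 𝕜 u x)
    (hv : DifferentiableAt 𝕜 v x) (hw : DifferentiableAt 𝕜 w x) :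
    deriv (fun y => u y + v y - w y) x = deriv u x + deriv v x - deriv w x := by
  rw [deriv_fun_sub (hu.fun_add hv) hw, deriv_fun_add hu hv]

theorem ShapeInvariant.add_sub_comp {A : Type*} {I : Set ℝ} {f : A → A} {R : A → ℝ}
    {W0 W1p : A → ℝ → ℝ} (h0 : ∀ a, ∀ x ∈ I, DifferentiableAt ℝ (W0 a) x)
    (hp : ∀ a, ∀ x ∈ I, DifferentiableAt ℝ (W1p a) x) (hsi0 : ShapeInvariant I f R W0)
    (hcc : GeneralizedCompatible I f W0 W1p) :
    ShapeInvariant I f R (fun a y => W0 a y + W1p a y - W1p (f a) y) := by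
  obtain ⟨ε, hε⟩ := hcc
  intro a x hx
  rw [deriv_fun_add_sub (h0 (f a) x hx) (hp (f a) x hx) (hp (f (f a)) x hx),
    deriv_fun_add_sub (h0 a x hx) (hp a x hx) (hp (f a) x hx)]
  linear_combination hsi0 a x hx + hε a x hx - hε (f a) x hx

theorem compatibility_implies_shape_invariance_general
    {A : Type*} (I : Set ℝ)
    (f : A → A) (R : A → ℝ) (W0 W1p : A → ℝ → ℝ) (ε : ℝ → ℝ)
    (h0 : ∀ a, ∀ x ∈ I, DifferentiableAt ℝ (W0 a) x)
    (hp : ∀ a, ∀ x ∈ I, DifferentiableAt ℝ (W1p a) x)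
    (hsi0 : ∀ a, ∀ x ∈ I,
      (W0 a x) ^ 2 - (W0 (f a) x) ^ 2 + deriv (W0 (f a)) x + deriv (W0 a) x = R (f a))
    (hcc : ∀ a, ∀ x ∈ I,
      (W1p a x) ^ 2 + deriv (W1p a) x + (W1p (f a) x) ^ 2 + deriv (W1p (f a)) x
        - 2 * W0 a x * W1p (f a) x + 2 * W0 a x * W1p a x
        - 2 * W1p (f a) x * W1p a x = ε x) :
    ∀ a, ∀ x ∈ I,
      (W0 a x + W1p a x - W1p (f a) x) ^ 2
        - (W0 (f a) x + W1p (f a) x - W1p (f (f a)) x) ^ 2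
        + deriv (fun y => W0 (f a) y + W1p (f a) y - W1p (f (f a)) y) x
        + deriv (fun y => W0 a y + W1p a y - W1p (f a) y) x = R (f a) :=
  ShapeInvariant.add_sub_comp h0 hp hsi0 ⟨ε, hcc⟩

/-- The generalized compatibility condition implies the shape invariance condition
for `W(x,a) = W0(x,a) + W1p(x,a) - W1p(x,f a)`. -/
theorem compatibility_implies_shape_invariance
    {A : Type*} (I : Set ℝ) (hI : IsOpen I)
    (f : A → A) (R : A → ℝ) (W0 W1p : A → ℝ → ℝ) (ε : ℝ → ℝ)
    (h0 : ∀ a, ∀ x ∈ I, DifferentiableAt ℝ (W0 a) x)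
    (hp : ∀ a, ∀ x ∈ I, DifferentiableAt ℝ (W1p a) x)
    (hsi0 : ∀ a, ∀ x ∈ I,
      (W0 a x) ^ 2 - (W0 (f a) x) ^ 2 + deriv (W0 (f a)) x + deriv (W0 a) x = R (f a))
    (hcc : ∀ a, ∀ x ∈ I,
      (W1p a x) ^ 2 + deriv (W1p a) x + (W1p (f a) x) ^ 2 + deriv (W1p (f a)) x
        - 2 * W0 a x * W1p (f a) x + 2 * W0 a x * W1p a x
        - 2 * W1p (f a) x * W1p a x = ε x) :
    ∀ a, ∀ x ∈ I,
      (W0 a x + W1p a x - W1p (f a) x) ^ 2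
        - (W0 (f a) x + W1p (f a) x - W1p (f (f a)) x) ^ 2
        + deriv (fun y => W0 (f a) y + W1p (f a) y - W1p (f (f a)) y) x
        + deriv (fun y => W0 a y + W1p a y - W1p (f a) y) x = R (f a) :=
  compatibility_implies_shape_invariance_general I f R W0 W1p ε h0 hp hsi0 hcc
end

section
/- Under the same setup (W0 shape invariant with remainder R, W1m(x,a) = W1p(x,f(a)), W = W0 + W1p - W1m), suppose W satisfies the shape invariance condition W(x,a)² - W(x,f(a))² + ∂ₓW(x,f(a)) + ∂ₓW(x,a) = R(f(a)) for all x, a. Then the expression E(x,a) := W1p(x,a)² + ∂ₓW1p(x,a) + W1m(x,a)² + ∂ₓW1m(x,a) - 2·W0(x,a)·W1m(x,a) + 2·W0(x,a)·W1p(x,a) - 2·W1m(x,a)·W1p(x,a) satisfies E(x,a) = E(x,f(a)) for all x ∈ I and a ∈ A. In particular, if f acts transitively enough that this forces independence of a (e.g., A is the orbit of a single point under f and E(x,·) is constant on orbits), E is a function of x only. -/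
/-!
Writing `W = W0 + W1p - W1m`, the compatibility expression is
`E(x,a) = W(x,a)² - W0(x,a)² + ∂ₓW1p(x,a) + ∂ₓW1m(x,a)`. Since `W1m(·,a) = W1p(·,f a)`, the
difference of the shape-invariance left-hand sides of `W` and of `W0` telescopes to
`E(x,a) - E(x,f a)`; both left-hand sides equal `R(f a)`, so this difference vanishes.
-/

section

variable {A : Type*} (f : A → A)

noncomputable def shapeInvarianceLHS (W : A → ℝ → ℝ) (a : A) (x : ℝ) : ℝ :=
  W a x ^ 2 - W (f a) x ^ 2 + deriv (W (f a)) x + deriv (W a) x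

def deformedSuperpotential (W0 W1p : A → ℝ → ℝ) (a : A) (y : ℝ) : ℝ :=
  W0 a y + W1p a y - W1p (f a) y

noncomputable def compatibility (W0 W1p : A → ℝ → ℝ) (a : A) (x : ℝ) : ℝ :=
  W1p a x ^ 2 + deriv (W1p a) x + W1p (f a) x ^ 2 + deriv (W1p (f a)) x
    - 2 * W0 a x * W1p (f a) x + 2 * W0 a x * W1p a x - 2 * W1p (f a) x * W1p a x

variable {f} {W0 W1p : A → ℝ → ℝ} {x : ℝ}

theorem deriv_deformedSuperpotential {a : A} (h0 : DifferentiableAt ℝ (W0 a) x)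
    (hp : DifferentiableAt ℝ (W1p a) x) (hm : DifferentiableAt ℝ (W1p (f a)) x) :
    deriv (deformedSuperpotential f W0 W1p a) x
      = deriv (W0 a) x + deriv (W1p a) x - deriv (W1p (f a)) x := by
  unfold deformedSuperpotential
  rw [deriv_fun_sub (h0.fun_add hp) hm, deriv_fun_add h0 hp]

theorem shapeInvarianceLHS_deformedSuperpotential_sub (a : A)
    (h0 : ∀ b, DifferentiableAt ℝ (W0 b) x) (hp : ∀ b, DifferentiableAt ℝ (W1p b) x) :
    shapeInvarianceLHS f (deformedSuperpotential f W0 W1p) a x - shapeInvarianceLHS f W0 a x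
      = compatibility f W0 W1p a x - compatibility f W0 W1p (f a) x := by
  simp only [shapeInvarianceLHS, compatibility]
  rw [deriv_deformedSuperpotential (h0 a) (hp a) (hp (f a)),
    deriv_deformedSuperpotential (h0 (f a)) (hp (f a)) (hp (f (f a)))]
  simp only [deformedSuperpotential]
  ring

end

theorem shape_invariance_implies_compatibility_invariant_general
    {A : Type*} (I : Set ℝ)
    (f : A → A) (R : A → ℝ) (W0 W1p : A → ℝ → ℝ)
    (h0 : ∀ a, ∀ x ∈ I, DifferentiableAt ℝ (W0 a) x)
    (hp : ∀ a, ∀ x ∈ I, DifferentiableAt ℝ (W1p a) x)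
    (hsi0 : ∀ a, ∀ x ∈ I,
      (W0 a x) ^ 2 - (W0 (f a) x) ^ 2 + deriv (W0 (f a)) x + deriv (W0 a) x = R (f a))
    (hsiW : ∀ a, ∀ x ∈ I,
      (W0 a x + W1p a x - W1p (f a) x) ^ 2
        - (W0 (f a) x + W1p (f a) x - W1p (f (f a)) x) ^ 2
        + deriv (fun y => W0 (f a) y + W1p (f a) y - W1p (f (f a)) y) x
        + deriv (fun y => W0 a y + W1p a y - W1p (f a) y) x = R (f a))
    (E : A → ℝ → ℝ)
    (hE : ∀ a, ∀ x, E a x =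
      (W1p a x) ^ 2 + deriv (W1p a) x + (W1p (f a) x) ^ 2 + deriv (W1p (f a)) x
        - 2 * W0 a x * W1p (f a) x + 2 * W0 a x * W1p a x
        - 2 * W1p (f a) x * W1p a x) :
    ∀ a, ∀ x ∈ I, E a x = E (f a) x := by
  intro a x hx
  have hW : shapeInvarianceLHS f (deformedSuperpotential f W0 W1p) a x = R (f a) :=
    hsiW a x hx
  have hW0 : shapeInvarianceLHS f W0 a x = R (f a) := hsi0 a x hx
  have key :=
    shapeInvarianceLHS_deformedSuperpotential_sub (f := f) a (h0 · x hx) (hp · x hx)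
  have hEa : E a x = compatibility f W0 W1p a x := hE a x
  have hEfa : E (f a) x = compatibility f W0 W1p (f a) x := hE (f a) x
  linarith

/-- Shape invariance of the full superpotential implies the compatibility
expression `E(x,a)` satisfies `E(x,a) = E(x, f a)` (converse direction). -/
theorem shape_invariance_implies_compatibility_invariant
    {A : Type*} (I : Set ℝ) (hI : IsOpen I)
    (f : A → A) (R : A → ℝ) (W0 W1p : A → ℝ → ℝ)
    (h0 : ∀ a, ∀ x ∈ I, DifferentiableAt ℝ (W0 a) x)
    (hp : ∀ a, ∀ x ∈ I, DifferentiableAt ℝ (W1p a) x)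
    (hsi0 : ∀ a, ∀ x ∈ I,
      (W0 a x) ^ 2 - (W0 (f a) x) ^ 2 + deriv (W0 (f a)) x + deriv (W0 a) x = R (f a))
    (hsiW : ∀ a, ∀ x ∈ I,
      (W0 a x + W1p a x - W1p (f a) x) ^ 2
        - (W0 (f a) x + W1p (f a) x - W1p (f (f a)) x) ^ 2
        + deriv (fun y => W0 (f a) y + W1p (f a) y - W1p (f (f a)) y) x
        + deriv (fun y => W0 a y + W1p a y - W1p (f a) y) x = R (f a))
    (E : A → ℝ → ℝ)
    (hE : ∀ a, ∀ x, E a x =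
      (W1p a x) ^ 2 + deriv (W1p a) x + (W1p (f a) x) ^ 2 + deriv (W1p (f a)) x
        - 2 * W0 a x * W1p (f a) x + 2 * W0 a x * W1p a x
        - 2 * W1p (f a) x * W1p a x) :
    ∀ a, ∀ x ∈ I, E a x = E (f a) x :=
  shape_invariance_implies_compatibility_invariant_general I f R W0 W1p h0 hp hsi0 hsiW E hE
end

section
/- Fix an integer l ≥ 0 and a real g. For x > 0, define ψp(x) = L_l^{(g+l-1/2)}(-x²) and ψm(x) = L_l^{(g+l-3/2)}(-x²). Then the identity 8l·ψp·ψm + (2(1-2g-2l)/x)·ψp·ψm' - 4x·ψm·ψp' - 2·ψm'·ψp' = 0 holds for all x > 0. -/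
open Finset

/-- Generalized binomial coefficient `C(z, k) = z(z-1)⋯(z-k+1)/k!`. -/
noncomputable def genChoose (z : ℝ) (k : ℕ) : ℝ :=
  (descPochhammer ℝ k).eval z / (Nat.factorial k)

/-- The generalized Laguerre polynomial
`L_n^{(α)}(x) = ∑_{k=0}^n (-1)^k C(n+α, n-k) x^k / k!`. -/
noncomputable def laguerre (n : ℕ) (α x : ℝ) : ℝ :=
  ∑ k ∈ range (n + 1),
    (-1 : ℝ) ^ k * genChoose ((n : ℝ) + α) (n - k) * x ^ k / (Nat.factorial k)

/-!
For `l = 0` both functions are constant. For `l ≥ 1` put `α = g + l - 1/2`, `u = -x²`,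
`P = L_l^{(α)}(u)`, `Q = L_l^{(α-1)}(u)`, `R = L_{l-1}^{(α)}(u)` and `S = L_{l-1}^{(α+1)}(u)`.
Since `(L_l^{(α)})' = -L_{l-1}^{(α+1)}`, the chain rule gives `ψp' = 2xS` and `ψm' = 2xR`, and the
left-hand side becomes `8P (lQ - αR - x²S) + 8x²S (P - Q - R)`. The second bracket vanishes by the
Pascal rule `L_l^{(α-1)} = L_l^{(α)} - L_{l-1}^{(α)}`, the first by the lowering relation
`l L_l^{(α-1)}(u) = α L_{l-1}^{(α)}(u) - u L_{l-1}^{(α+1)}(u)`, which is the Pascal rule combined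
with the three-term relation coming from the Euler operator `u d/du`.
-/

open scoped Nat

lemma descPochhammer_eval_succ_left {R : Type*} [CommRing R] (z : R) (m : ℕ) :
    (descPochhammer R (m + 1)).eval z = z * (descPochhammer R m).eval (z - 1) := by
  simp [descPochhammer_succ_left, Polynomial.eval_comp]

@[simp]
lemma genChoose_zero (z : ℝ) : genChoose z 0 = 1 := by
  simp [genChoose]

lemma succ_mul_genChoose_succ (z : ℝ) (m : ℕ) :
    ((m : ℝ) + 1) * genChoose z (m + 1) = z * genChoose (z - 1) m := by
  rw [genChoose, genChoose, descPochhammer_eval_succ_left, Nat.factorial_succ]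
  push_cast
  field_simp

lemma genChoose_succ (z : ℝ) (m : ℕ) :
    genChoose z (m + 1) = genChoose (z - 1) (m + 1) + genChoose (z - 1) m := by
  rw [genChoose, genChoose, genChoose, descPochhammer_eval_succ_left, descPochhammer_succ_eval,
    Nat.factorial_succ]
  push_cast
  field_simp
  ring

-- `n - k` is truncated subtraction, so identities between terms only hold for `k ≤ n`.
noncomputable def laguerreTerm (n : ℕ) (α : ℝ) (k : ℕ) (x : ℝ) : ℝ :=
  (-1) ^ k * genChoose ((n : ℝ) + α) (n - k) * x ^ k / k !

lemma laguerre_eq_sum_laguerreTerm (n : ℕ) (α x : ℝ) :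
    laguerre n α x = ∑ k ∈ range (n + 1), laguerreTerm n α k x := rfl

lemma laguerreTerm_self (n : ℕ) (α x : ℝ) :
    laguerreTerm n α n x = (-1) ^ n * x ^ n / n ! := by
  simp [laguerreTerm]

lemma laguerreTerm_zero (n : ℕ) (α : ℝ) :
    laguerreTerm n α 0 = fun _ => genChoose ((n : ℝ) + α) n := by
  funext x
  simp [laguerreTerm]

lemma laguerreTerm_succ_sub_one {n k : ℕ} (hk : k ≤ n) (α x : ℝ) :
    laguerreTerm (n + 1) (α - 1) k x = laguerreTerm (n + 1) α k x - laguerreTerm n α k x := by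
  have hz : ((n + 1 : ℕ) : ℝ) + α - 1 = n + α := by push_cast; ring
  rw [laguerreTerm, laguerreTerm, laguerreTerm, Nat.sub_add_comm hk, ← add_sub_assoc,
    genChoose_succ (((n + 1 : ℕ) : ℝ) + α), hz]
  ring

lemma add_mul_laguerreTerm {n k : ℕ} (hk : k ≤ n) (α x : ℝ) :
    ((n : ℝ) + 1 + α) * laguerreTerm n α k x =
      ((n : ℝ) + 1 - k) * laguerreTerm (n + 1) α k x := by
  have hm := succ_mul_genChoose_succ ((n + 1 : ℕ) + α) (n - k)
  have hz : ((n + 1 : ℕ) : ℝ) + α - 1 = n + α := by push_cast; ring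
  rw [hz, Nat.cast_sub hk] at hm
  rw [laguerreTerm, laguerreTerm, Nat.sub_add_comm hk]
  push_cast at hm ⊢
  linear_combination -((-1) ^ k * x ^ k / k !) * hm

lemma mul_laguerreTerm_add_one (n : ℕ) (α : ℝ) (k : ℕ) (x : ℝ) :
    x * laguerreTerm n (α + 1) k x = -((k : ℝ) + 1) * laguerreTerm (n + 1) α (k + 1) x := by
  have hz : ((n + 1 : ℕ) : ℝ) + α = n + (α + 1) := by push_cast; ring
  rw [laguerreTerm, laguerreTerm, hz, Nat.add_sub_add_right, Nat.factorial_succ]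
  push_cast
  field_simp
  ring

lemma hasDerivAt_laguerreTerm_succ (n : ℕ) (α : ℝ) (k : ℕ) (x : ℝ) :
    HasDerivAt (laguerreTerm (n + 1) α (k + 1)) (-laguerreTerm n (α + 1) k x) x := by
  have hz : ((n + 1 : ℕ) : ℝ) + α = n + (α + 1) := by push_cast; ring
  have h := ((hasDerivAt_pow (k + 1) x).const_mul
    ((-1 : ℝ) ^ (k + 1) * genChoose (((n + 1 : ℕ) : ℝ) + α) (n + 1 - (k + 1)))).div_const
    ((k + 1)! : ℝ)
  refine h.congr_deriv ?_
  rw [laguerreTerm, hz, Nat.add_sub_add_right, Nat.add_sub_cancel, Nat.factorial_succ]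
  push_cast
  field_simp
  ring

lemma laguerre_zero (α x : ℝ) : laguerre 0 α x = 1 := by
  simp [laguerre]

lemma laguerre_succ_sub_one (n : ℕ) (α x : ℝ) :
    laguerre (n + 1) (α - 1) x = laguerre (n + 1) α x - laguerre n α x := by
  simp only [laguerre_eq_sum_laguerreTerm]
  rw [sum_range_succ _ (n + 1), sum_range_succ _ (n + 1), laguerreTerm_self, laguerreTerm_self,
    sum_congr rfl fun k hk => laguerreTerm_succ_sub_one (Nat.lt_succ_iff.mp (mem_range.mp hk)) α x,
    sum_sub_distrib]
  ring

lemma hasDerivAt_laguerre_succ (n : ℕ) (α x : ℝ) :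
    HasDerivAt (laguerre (n + 1) α) (-laguerre n (α + 1) x) x := by
  have hsplit : laguerre (n + 1) α = fun y =>
      ∑ k ∈ range (n + 1), laguerreTerm (n + 1) α (k + 1) y +
        genChoose (((n + 1 : ℕ) : ℝ) + α) (n + 1) := by
    funext y
    rw [laguerre_eq_sum_laguerreTerm, sum_range_succ', laguerreTerm_zero]
  rw [hsplit, laguerre_eq_sum_laguerreTerm, ← sum_neg_distrib]
  exact (HasDerivAt.fun_sum fun k _ => hasDerivAt_laguerreTerm_succ n α k x).add_const _

lemma mul_laguerre_add_one (n : ℕ) (α x : ℝ) :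
    x * laguerre n (α + 1) x =
      ((n : ℝ) + 1 + α) * laguerre n α x - ((n : ℝ) + 1) * laguerre (n + 1) α x := by
  -- Both sides equal `-∑ k Tₖ`, which is `x` times the derivative of `L_{n+1}^{(α)}`.
  set T : ℕ → ℝ := fun k => laguerreTerm (n + 1) α k x
  have hweights : ∑ k ∈ range (n + 1), ((n : ℝ) + 1 - k) * T k =
      ∑ k ∈ range (n + 1), ((n : ℝ) + 1) * T k - ∑ k ∈ range (n + 1), (k : ℝ) * T k := by
    rw [← sum_sub_distrib]
    exact sum_congr rfl fun _ _ => by ring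
  calc x * laguerre n (α + 1) x = ∑ k ∈ range (n + 1), -((k : ℝ) + 1) * T (k + 1) := by
        rw [laguerre_eq_sum_laguerreTerm, mul_sum]
        exact sum_congr rfl fun k _ => mul_laguerreTerm_add_one n α k x
    _ = -∑ k ∈ range (n + 2), (k : ℝ) * T k := by
        rw [sum_range_succ' _ (n + 1)]
        simp only [Nat.cast_zero, zero_mul, add_zero, Nat.cast_succ, neg_mul, sum_neg_distrib]
    _ = ∑ k ∈ range (n + 1), ((n : ℝ) + 1 - k) * T k -
          ((n : ℝ) + 1) * ∑ k ∈ range (n + 2), T k := by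
        rw [sum_range_succ (fun k => (k : ℝ) * T k), sum_range_succ T, mul_add, mul_sum, hweights]
        push_cast
        ring
    _ = _ := by
        rw [laguerre_eq_sum_laguerreTerm n α, mul_sum (range (n + 1)),
          sum_congr rfl fun k hk => add_mul_laguerreTerm (Nat.lt_succ_iff.mp (mem_range.mp hk)) α x,
          laguerre_eq_sum_laguerreTerm (n + 1)]

lemma mul_laguerre_succ_sub_one (n : ℕ) (α x : ℝ) :
    ((n : ℝ) + 1) * laguerre (n + 1) (α - 1) x = α * laguerre n α x - x * laguerre n (α + 1) x := by
  rw [laguerre_succ_sub_one, mul_laguerre_add_one]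
  ring

lemma hasDerivAt_laguerre_succ_neg_sq (n : ℕ) (α x : ℝ) :
    HasDerivAt (fun y => laguerre (n + 1) α (-y ^ 2)) (2 * x * laguerre n (α + 1) (-x ^ 2)) x := by
  have hsq : HasDerivAt (fun y : ℝ => -y ^ 2) (-(2 * x)) x := by
    simpa using (hasDerivAt_pow 2 x).fun_neg
  refine ((hasDerivAt_laguerre_succ n α (-x ^ 2)).comp x hsq).congr_deriv ?_
  ring

/-- The new Laguerre polynomial relation (cc12RO) expressing the compatibility
condition for the extended radial oscillator. -/
theorem laguerre_compatibility_relation (l : ℕ) (g : ℝ)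
    (ψp ψm : ℝ → ℝ)
    (hψp : ∀ x, ψp x = laguerre l (g + l - 1/2) (-x ^ 2))
    (hψm : ∀ x, ψm x = laguerre l (g + l - 3/2) (-x ^ 2)) :
    ∀ x : ℝ, 0 < x →
      8 * l * ψp x * ψm x + (2 * (1 - 2 * g - 2 * l) / x) * ψp x * deriv ψm x
        - 4 * x * ψm x * deriv ψp x - 2 * deriv ψm x * deriv ψp x = 0 := by
  intro x hx
  cases l with
  | zero =>
    have hp : ψp = fun _ => 1 := funext fun y => (hψp y).trans (laguerre_zero _ _)
    have hm : ψm = fun _ => 1 := funext fun y => (hψm y).trans (laguerre_zero _ _)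
    simp [hp, hm]
  | succ n =>
    set α : ℝ := g + ((n + 1 : ℕ) : ℝ) - 1 / 2 with hα
    have hαm : g + ((n + 1 : ℕ) : ℝ) - 3 / 2 = α - 1 := by ring
    have hdp : deriv ψp x = 2 * x * laguerre n (α + 1) (-x ^ 2) := by
      rw [funext hψp]
      exact (hasDerivAt_laguerre_succ_neg_sq n α x).deriv
    have hdm : deriv ψm x = 2 * x * laguerre n α (-x ^ 2) := by
      rw [funext hψm, hαm]
      have h := (hasDerivAt_laguerre_succ_neg_sq n (α - 1) x).deriv
      rwa [sub_add_cancel] at h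
    have hlower := mul_laguerre_succ_sub_one n α (-x ^ 2)
    have hpascal := laguerre_succ_sub_one n α (-x ^ 2)
    rw [hψp, hψm, hdp, hdm, hαm]
    field_simp
    push_cast at hα ⊢
    linear_combination 8 * laguerre (n + 1) α (-x ^ 2) * hlower
      - 8 * x ^ 2 * laguerre n (α + 1) (-x ^ 2) * hpascal
      + 8 * laguerre (n + 1) α (-x ^ 2) * laguerre n α (-x ^ 2) * hα
end

section
/- Let ψp, ψm : I → ℝ be twice differentiable, nonvanishing on an open interval I, and W0 : I → ℝ. Suppose (ψp'' + 2·W0·ψp')·ψm + (ψm'' - 2·W0·ψm')·ψp - 2·ψp'·ψm' = 0 on I. Then with W1p = ψp'/ψp and W1m = ψm'/ψm, the two potentials V = (W0 + W1p - W1m)² - (W0 + W1p - W1m)' and V0 - 2·W1p' coincide pointwise, where V0 = W0² - W0'. -/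
/-! Writing `a = ψp'/ψp`, `b = ψm'/ψm`, the Riccati identity `a' = ψp''/ψp - a²` (and likewise for `b`)
turns `V - (V0 - 2a')` into `ψp''/ψp + ψm''/ψm + 2 W0 (a - b) - 2ab`, which is the compatibility
condition divided by `ψp ψm`. -/

theorem deriv_deriv_div_self {𝕜 : Type*} [NontriviallyNormedField 𝕜] {f : 𝕜 → 𝕜} {x : 𝕜}
    (hf : DifferentiableAt 𝕜 f x) (hf' : DifferentiableAt 𝕜 (deriv f) x) (hx : f x ≠ 0) :
    deriv (fun y => deriv f y / f y) x = deriv (deriv f) x / f x - (deriv f x / f x) ^ 2 := by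
  rw [deriv_fun_div hf' hf hx]
  field_simp

theorem compatibility_div_mul {K : Type*} [Field K] {w p p' p'' m m' m'' : K}
    (hp : p ≠ 0) (hm : m ≠ 0)
    (hcc : (p'' + 2 * w * p') * m + (m'' - 2 * w * m') * p - 2 * p' * m' = 0) :
    p'' / p + m'' / m + 2 * w * (p' / p - m' / m) - 2 * (p' / p) * (m' / m) = 0 := by
  field_simp
  linear_combination hcc

theorem compatibility_reduces_V_general
    (I : Set ℝ) (ψp ψm W0 : ℝ → ℝ)
    (hp1 : ∀ x ∈ I, DifferentiableAt ℝ ψp x)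
    (hp2 : ∀ x ∈ I, DifferentiableAt ℝ (deriv ψp) x)
    (hm1 : ∀ x ∈ I, DifferentiableAt ℝ ψm x)
    (hm2 : ∀ x ∈ I, DifferentiableAt ℝ (deriv ψm) x)
    (h0 : ∀ x ∈ I, DifferentiableAt ℝ W0 x)
    (hpne : ∀ x ∈ I, ψp x ≠ 0) (hmne : ∀ x ∈ I, ψm x ≠ 0)
    (hcc : ∀ x ∈ I,
      (deriv (deriv ψp) x + 2 * W0 x * deriv ψp x) * ψm x
        + (deriv (deriv ψm) x - 2 * W0 x * deriv ψm x) * ψp x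
        - 2 * deriv ψp x * deriv ψm x = 0) :
    ∀ x ∈ I,
      (W0 x + deriv ψp x / ψp x - deriv ψm x / ψm x) ^ 2
        - deriv (fun y => W0 y + deriv ψp y / ψp y - deriv ψm y / ψm y) x =
      (W0 x ^ 2 - deriv W0 x) - 2 * deriv (fun y => deriv ψp y / ψp y) x := by
  intro x hx
  have hWp : DifferentiableAt ℝ (fun y => deriv ψp y / ψp y) x :=
    (hp2 x hx).div (hp1 x hx) (hpne x hx)
  have hWm : DifferentiableAt ℝ (fun y => deriv ψm y / ψm y) x :=
    (hm2 x hx).div (hm1 x hx) (hmne x hx)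
  rw [deriv_fun_sub ((h0 x hx).fun_add hWp) hWm, deriv_fun_add (h0 x hx) hWp,
    deriv_deriv_div_self (hp1 x hx) (hp2 x hx) (hpne x hx),
    deriv_deriv_div_self (hm1 x hx) (hm2 x hx) (hmne x hx)]
  linear_combination compatibility_div_mul (hpne x hx) (hmne x hx) (hcc x hx)

/-- Under the compatibility condition (cc12) with `ε = 0`, the extended partner
potential `V = W² - W'` reduces to `V0 - 2 W1p'` where `V0 = W0² - W0'`. -/
theorem compatibility_reduces_V
    (I : Set ℝ) (hI : IsOpen I) (ψp ψm W0 : ℝ → ℝ)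
    (hp1 : ∀ x ∈ I, DifferentiableAt ℝ ψp x)
    (hp2 : ∀ x ∈ I, DifferentiableAt ℝ (deriv ψp) x)
    (hm1 : ∀ x ∈ I, DifferentiableAt ℝ ψm x)
    (hm2 : ∀ x ∈ I, DifferentiableAt ℝ (deriv ψm) x)
    (h0 : ∀ x ∈ I, DifferentiableAt ℝ W0 x)
    (hpne : ∀ x ∈ I, ψp x ≠ 0) (hmne : ∀ x ∈ I, ψm x ≠ 0)
    (hcc : ∀ x ∈ I,
      (deriv (deriv ψp) x + 2 * W0 x * deriv ψp x) * ψm x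
        + (deriv (deriv ψm) x - 2 * W0 x * deriv ψm x) * ψp x
        - 2 * deriv ψp x * deriv ψm x = 0) :
    ∀ x ∈ I,
      (W0 x + deriv ψp x / ψp x - deriv ψm x / ψm x) ^ 2
        - deriv (fun y => W0 y + deriv ψp y / ψp y - deriv ψm y / ψm y) x =
      (W0 x ^ 2 - deriv W0 x) - 2 * deriv (fun y => deriv ψp y / ψp y) x :=
  compatibility_reduces_V_general I ψp ψm W0 hp1 hp2 hm1 hm2 h0 hpne hmne hcc
end

section
/- Let ψp, ψm, W0 be as above and suppose the compatibility condition (ψp'' + 2·W0·ψp')·ψm + (ψm'' - 2·W0·ψm')·ψp - 2·ψp'·ψm' = 0 holds on I. Then Ṽ = (W0 + W1p - W1m)² + (W0 + W1p - W1m)' equals Ṽ0 - 2·W1m' pointwise, where Ṽ0 = W0² + W0', W1p = ψp'/ψp, W1m = ψm'/ψm. -/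
/-! The logarithmic derivative `w = ψ'/ψ` satisfies the Riccati equation `w' = ψ''/ψ - w²`.
Expanding `Ṽ` with it for `W1p` and `W1m`, the difference `Ṽ - (Ṽ0 - 2 W1m')` is exactly the
left-hand side of the compatibility condition divided by `ψp ψm`, hence zero. -/

theorem hasDerivAt_deriv_div_self {𝕜 : Type*} [NontriviallyNormedField 𝕜] {f : 𝕜 → 𝕜} {x : 𝕜}
    (hf : DifferentiableAt 𝕜 f x) (hf' : DifferentiableAt 𝕜 (deriv f) x) (hx : f x ≠ 0) :
    HasDerivAt (fun y => deriv f y / f y) (deriv (deriv f) x / f x - (deriv f x / f x) ^ 2) x := by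
  refine (hf'.hasDerivAt.fun_div hf.hasDerivAt hx).congr_deriv ?_
  field_simp

theorem compatibility_reduces_Vtilde_general
    (I : Set ℝ) (ψp ψm W0 : ℝ → ℝ)
    (hp1 : ∀ x ∈ I, DifferentiableAt ℝ ψp x)
    (hp2 : ∀ x ∈ I, DifferentiableAt ℝ (deriv ψp) x)
    (hm1 : ∀ x ∈ I, DifferentiableAt ℝ ψm x)
    (hm2 : ∀ x ∈ I, DifferentiableAt ℝ (deriv ψm) x)
    (h0 : ∀ x ∈ I, DifferentiableAt ℝ W0 x)
    (hpne : ∀ x ∈ I, ψp x ≠ 0) (hmne : ∀ x ∈ I, ψm x ≠ 0)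
    (hcc : ∀ x ∈ I,
      (deriv (deriv ψp) x + 2 * W0 x * deriv ψp x) * ψm x
        + (deriv (deriv ψm) x - 2 * W0 x * deriv ψm x) * ψp x
        - 2 * deriv ψp x * deriv ψm x = 0) :
    ∀ x ∈ I,
      (W0 x + deriv ψp x / ψp x - deriv ψm x / ψm x) ^ 2
        + deriv (fun y => W0 y + deriv ψp y / ψp y - deriv ψm y / ψm y) x =
      (W0 x ^ 2 + deriv W0 x) - 2 * deriv (fun y => deriv ψm y / ψm y) x := by
  intro x hx
  have hW1p := hasDerivAt_deriv_div_self (hp1 x hx) (hp2 x hx) (hpne x hx)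
  have hW1m := hasDerivAt_deriv_div_self (hm1 x hx) (hm2 x hx) (hmne x hx)
  rw [((h0 x hx).hasDerivAt.fun_add hW1p |>.fun_sub hW1m).deriv, hW1m.deriv]
  have hψp := hpne x hx
  have hψm := hmne x hx
  field_simp
  linear_combination ψp x * ψm x * hcc x hx

/-- Under the compatibility condition (cc12) with `ε = 0`, the extended partner
potential `Ṽ = W² + W'` reduces to `Ṽ0 - 2 W1m'` where `Ṽ0 = W0² + W0'`. -/
theorem compatibility_reduces_Vtilde
    (I : Set ℝ) (hI : IsOpen I) (ψp ψm W0 : ℝ → ℝ)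
    (hp1 : ∀ x ∈ I, DifferentiableAt ℝ ψp x)
    (hp2 : ∀ x ∈ I, DifferentiableAt ℝ (deriv ψp) x)
    (hm1 : ∀ x ∈ I, DifferentiableAt ℝ ψm x)
    (hm2 : ∀ x ∈ I, DifferentiableAt ℝ (deriv ψm) x)
    (h0 : ∀ x ∈ I, DifferentiableAt ℝ W0 x)
    (hpne : ∀ x ∈ I, ψp x ≠ 0) (hmne : ∀ x ∈ I, ψm x ≠ 0)
    (hcc : ∀ x ∈ I,
      (deriv (deriv ψp) x + 2 * W0 x * deriv ψp x) * ψm x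
        + (deriv (deriv ψm) x - 2 * W0 x * deriv ψm x) * ψp x
        - 2 * deriv ψp x * deriv ψm x = 0) :
    ∀ x ∈ I,
      (W0 x + deriv ψp x / ψp x - deriv ψm x / ψm x) ^ 2
        + deriv (fun y => W0 y + deriv ψp y / ψp y - deriv ψm y / ψm y) x =
      (W0 x ^ 2 + deriv W0 x) - 2 * deriv (fun y => deriv ψm y / ψm y) x :=
  compatibility_reduces_Vtilde_general I ψp ψm W0 hp1 hp2 hm1 hm2 h0 hpne hmne hcc
end

section
/- Fix a real l > 0 and real g with g + l > 1/2. For x > 0, define ψp(x) = ₁F₁(-l; g + l + 1/2; -x²) and ψm(x) = ₁F₁(-l; g + l - 1/2; -x²). Then ψp satisfies ψp'' = 4l·ψp - 2((g+l)/x + x)·ψp' for all x > 0, and moreover 8l·ψp·ψm + (2(1-2g-2l)/x)·ψp·ψm' - 4x·ψm·ψp' - 2·ψm'·ψp' = 0 on (0,∞). -/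
/-- The confluent hypergeometric (Kummer) function
`₁F₁(a; b; z) = ∑_{k≥0} (a)_k/(b)_k z^k/k!`. -/
noncomputable def hyp1F1 (a b z : ℝ) : ℝ :=
  ∑' k : ℕ,
    (ascPochhammer ℝ k).eval a / (ascPochhammer ℝ k).eval b * z ^ k / (Nat.factorial k)

/-!
`₁F₁(a; b; ·)` is given by an everywhere convergent power series, so it may be differentiated
termwise. Kummer's equation `z w'' + (b - z) w' - a w = 0` and the two contiguous relations
`b F(a; b) = b F(a; b+1) + z F'(a; b+1)` and `b F'(a; b) = a F(a; b+1) + z F'(a; b+1)` then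
reduce to identities between the coefficients `(a)ₖ / ((b)ₖ k!)`. Substituting `z = -x²`,
Kummer's equation with `b = g + l + 1/2` is the ODE for `ψp`. With `b = g + l - 1/2`, `ψm` is
`F(a; b)` and `ψp` is `F(a; b+1)`; after multiplication by `b`, the contiguous relations
eliminate `ψm` and `ψm'` from the second identity, which then cancels term by term.
-/

open Filter Topology

noncomputable def seriesSum (c : ℕ → ℝ) (z : ℝ) : ℝ := ∑' k, c k * z ^ k

def derivCoeff (c : ℕ → ℝ) (k : ℕ) : ℝ := (k + 1) * c (k + 1)

/-- Over `ℝ`, `Summable` means absolute convergence, so this says the radius of convergence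
is infinite. -/
def IsEntireSeries (c : ℕ → ℝ) : Prop := ∀ z : ℝ, Summable fun k => c k * z ^ k

namespace IsEntireSeries

variable {c d : ℕ → ℝ}

theorem of_abs_succ_le {q : ℕ → ℝ} (hq : Tendsto q atTop (𝓝 0))
    (hc : ∀ k, |c (k + 1)| ≤ q k * |c k|) : IsEntireSeries c := by
  intro z
  refine summable_of_ratio_norm_eventually_le (r := 1 / 2) (by norm_num) ?_
  have hqz : ∀ᶠ k in atTop, q k * |z| ≤ 1 / 2 := by
    have := hq.mul_const |z|
    rw [zero_mul] at this
    exact this.eventually (ge_mem_nhds (by norm_num))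
  filter_upwards [hqz] with k hk
  simp only [norm_mul, norm_pow, Real.norm_eq_abs, pow_succ]
  calc |c (k + 1)| * (|z| ^ k * |z|) ≤ q k * |c k| * (|z| ^ k * |z|) := by gcongr; exact hc k
    _ = q k * |z| * (|c k| * |z| ^ k) := by ring
    _ ≤ 1 / 2 * (|c k| * |z| ^ k) := by gcongr

theorem derivCoeff (h : IsEntireSeries c) : IsEntireSeries (_root_.derivCoeff c) := by
  intro z
  set R := |z| + 1
  have hR : Summable fun k => |c (k + 1)| * (2 * R) ^ (k + 1) := by
    simpa [abs_mul, abs_pow, R, abs_of_nonneg (by positivity : (0:ℝ) ≤ |z| + 1)] using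
      ((summable_nat_add_iff 1).mpr (h (2 * R))).abs
  refine Summable.of_norm_bounded hR fun k => ?_
  have hk : (k : ℝ) + 1 ≤ 2 ^ (k + 1) := by exact_mod_cast (Nat.lt_two_pow_self (n := k + 1)).le
  have hzR : |z| ^ k ≤ R ^ (k + 1) :=
    (pow_le_pow_left₀ (abs_nonneg z) (by linarith) k).trans
      (pow_le_pow_right₀ (by simp [R]) k.le_succ)
  calc ‖_root_.derivCoeff c k * z ^ k‖ = ((k : ℝ) + 1) * |c (k + 1)| * |z| ^ k := by
        simp [_root_.derivCoeff, abs_of_nonneg (by positivity : (0:ℝ) ≤ k + 1)]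
    _ ≤ 2 ^ (k + 1) * |c (k + 1)| * R ^ (k + 1) := by gcongr
    _ = |c (k + 1)| * (2 * R) ^ (k + 1) := by rw [mul_pow]; ring

theorem natCast_mul (h : IsEntireSeries c) : IsEntireSeries fun k => (k : ℝ) * c k := by
  intro z
  rw [← summable_nat_add_iff 1]
  refine ((h.derivCoeff z).mul_left z).congr fun k => ?_
  simp only [_root_.derivCoeff]
  push_cast
  ring

theorem seriesSum_add (hc : IsEntireSeries c) (hd : IsEntireSeries d) (z : ℝ) :
    seriesSum (fun k => c k + d k) z = seriesSum c z + seriesSum d z := by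
  simp only [seriesSum, add_mul]
  exact (hc z).tsum_add (hd z)

theorem seriesSum_natCast_mul (h : IsEntireSeries c) (z : ℝ) :
    seriesSum (fun k => (k : ℝ) * c k) z = z * seriesSum (_root_.derivCoeff c) z := by
  rw [seriesSum, (h.natCast_mul z).tsum_eq_zero_add, seriesSum, ← tsum_mul_left]
  simp only [_root_.derivCoeff, Nat.cast_zero, zero_mul, zero_add, Nat.cast_add, Nat.cast_one,
    pow_succ]
  exact tsum_congr fun k => by ring

theorem hasDerivAt (h : IsEntireSeries c) (z : ℝ) :
    HasDerivAt (seriesSum c) (seriesSum (_root_.derivCoeff c) z) z := by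
  have hsplit : seriesSum c = fun y => c 0 + ∑' k, c (k + 1) * y ^ (k + 1) := by
    funext y
    rw [seriesSum, (h y).tsum_eq_zero_add]
    simp
  set R := |z| + 1
  have hz : z ∈ Metric.ball (0 : ℝ) R := by simp [R]
  rw [hsplit]
  refine HasDerivAt.const_add _ <| hasDerivAt_tsum_of_isPreconnected
    (g := fun k y => c (k + 1) * y ^ (k + 1)) (g' := fun k y => _root_.derivCoeff c k * y ^ k)
    (u := fun k => ‖_root_.derivCoeff c k * R ^ k‖) (h.derivCoeff R).norm Metric.isOpen_ball
    (convex_ball 0 R).isPreconnected (fun k y _ => ?_) (fun k y hy => ?_) hz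
    ((summable_nat_add_iff 1).mpr (h z)) hz
  · refine ((hasDerivAt_pow (k + 1) y).const_mul (c (k + 1))).congr_deriv ?_
    simp only [_root_.derivCoeff, Nat.add_sub_cancel]
    push_cast
    ring
  · rw [mem_ball_zero_iff, Real.norm_eq_abs] at hy
    rw [norm_mul, norm_mul, norm_pow, norm_pow]
    gcongr
    exact hy.le.trans (le_abs_self R)

theorem const_mul (h : IsEntireSeries c) (a : ℝ) : IsEntireSeries fun k => a * c k :=
  fun z => ((h z).mul_left a).congr fun k => by ring

theorem differentiable (h : IsEntireSeries c) : Differentiable ℝ (seriesSum c) :=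
  fun z => (h.hasDerivAt z).differentiableAt

theorem deriv_seriesSum (h : IsEntireSeries c) :
    deriv (seriesSum c) = seriesSum (_root_.derivCoeff c) :=
  funext fun z => (h.hasDerivAt z).deriv

end IsEntireSeries

theorem seriesSum_const_mul (a : ℝ) (c : ℕ → ℝ) (z : ℝ) :
    seriesSum (fun k => a * c k) z = a * seriesSum c z := by
  simp only [seriesSum, mul_assoc]
  exact tsum_mul_left

theorem ascPochhammer_eval_succ_left {S : Type*} [CommSemiring S] (n : ℕ) (a : S) :
    (ascPochhammer S (n + 1)).eval a = a * (ascPochhammer S n).eval (a + 1) := by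
  simp [ascPochhammer_succ_left, Polynomial.eval_comp]

noncomputable def kummerCoeff (a b : ℝ) (k : ℕ) : ℝ :=
  (ascPochhammer ℝ k).eval a / (ascPochhammer ℝ k).eval b / k.factorial

theorem hyp1F1_eq_seriesSum (a b : ℝ) : hyp1F1 a b = seriesSum (kummerCoeff a b) :=
  funext fun z => tsum_congr fun k => by rw [kummerCoeff]; ring

section KummerCoeff

variable (a : ℝ) {b : ℝ} (hb : 0 < b) (k : ℕ)
include hb

theorem derivCoeff_kummerCoeff_mul :
    derivCoeff (kummerCoeff a b) k * (b + k) = kummerCoeff a b k * (a + k) := by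
  have := (ascPochhammer_pos k b hb).ne'
  simp only [derivCoeff, kummerCoeff, ascPochhammer_succ_eval, Nat.factorial_succ]
  push_cast
  field_simp

theorem kummerCoeff_contiguous :
    b * kummerCoeff a b k = (b + k) * kummerCoeff a (b + 1) k := by
  have := (ascPochhammer_pos k b hb).ne'
  have := (ascPochhammer_pos k (b + 1) (by linarith)).ne'
  have h := (ascPochhammer_eval_succ_left k b).symm.trans (ascPochhammer_succ_eval k b)
  simp only [kummerCoeff]
  field_simp
  linear_combination (ascPochhammer ℝ k).eval a * h

theorem derivCoeff_kummerCoeff_contiguous :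
    b * derivCoeff (kummerCoeff a b) k = (a + k) * kummerCoeff a (b + 1) k := by
  have := (ascPochhammer_pos k (b + 1) (by linarith)).ne'
  simp only [derivCoeff, kummerCoeff, ascPochhammer_succ_eval k a,
    ascPochhammer_eval_succ_left k b, Nat.factorial_succ]
  push_cast
  field_simp

end KummerCoeff

theorem isEntireSeries_kummerCoeff (a : ℝ) {b : ℝ} (hb : 0 < b) :
    IsEntireSeries (kummerCoeff a b) := by
  refine IsEntireSeries.of_abs_succ_le (q := fun k => (|a| + 1) / (b + k))
    (tendsto_const_nhds.div_atTop (tendsto_atTop_add_const_left _ b tendsto_natCast_atTop_atTop))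
    fun k => ?_
  have hbk : 0 < b + k := by positivity
  have hrec := congrArg abs (derivCoeff_kummerCoeff_mul a hb k)
  simp only [derivCoeff, abs_mul, abs_of_pos hbk,
    abs_of_pos (Nat.cast_add_one_pos (α := ℝ) k)] at hrec
  have hak : |a + k| ≤ (|a| + 1) * (k + 1) := by
    have := abs_add_le a k
    rw [Nat.abs_cast] at this
    nlinarith [abs_nonneg a, k.cast_nonneg (α := ℝ)]
  rw [div_mul_eq_mul_div, le_div_iff₀ hbk]
  refine le_of_mul_le_mul_left ?_ (Nat.cast_add_one_pos k)
  calc ((k : ℝ) + 1) * (|kummerCoeff a b (k + 1)| * (b + k))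
        = |kummerCoeff a b k| * |a + k| := by rw [← hrec]; ring
    _ ≤ |kummerCoeff a b k| * ((|a| + 1) * (k + 1)) := by gcongr
    _ = ((k : ℝ) + 1) * ((|a| + 1) * |kummerCoeff a b k|) := by ring

section Hyp1F1

variable (a : ℝ) {b : ℝ} (hb : 0 < b)
include hb

theorem deriv_hyp1F1 : deriv (hyp1F1 a b) = seriesSum (derivCoeff (kummerCoeff a b)) := by
  rw [hyp1F1_eq_seriesSum, (isEntireSeries_kummerCoeff a hb).deriv_seriesSum]

theorem differentiable_hyp1F1 : Differentiable ℝ (hyp1F1 a b) := by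
  rw [hyp1F1_eq_seriesSum]
  exact (isEntireSeries_kummerCoeff a hb).differentiable

theorem differentiable_deriv_hyp1F1 : Differentiable ℝ (deriv (hyp1F1 a b)) := by
  rw [deriv_hyp1F1 a hb]
  exact (isEntireSeries_kummerCoeff a hb).derivCoeff.differentiable

theorem hyp1F1_kummer_equation (z : ℝ) :
    z * deriv (deriv (hyp1F1 a b)) z + (b - z) * deriv (hyp1F1 a b) z - a * hyp1F1 a b z = 0 := by
  set c := kummerCoeff a b
  have hc : IsEntireSeries c := isEntireSeries_kummerCoeff a hb
  have hc' : IsEntireSeries (derivCoeff c) := hc.derivCoeff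
  have hcoeff : (fun k : ℕ => (k : ℝ) * derivCoeff c k + b * derivCoeff c k)
      = fun k : ℕ => (k : ℝ) * c k + a * c k := by
    funext k
    linear_combination derivCoeff_kummerCoeff_mul a hb k
  have hsum := congrArg (seriesSum · z) hcoeff
  rw [hc'.natCast_mul.seriesSum_add (hc'.const_mul b),
    hc.natCast_mul.seriesSum_add (hc.const_mul a), hc'.seriesSum_natCast_mul,
    hc.seriesSum_natCast_mul, seriesSum_const_mul, seriesSum_const_mul] at hsum
  rw [deriv_hyp1F1 a hb, hc'.deriv_seriesSum, hyp1F1_eq_seriesSum]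
  linear_combination hsum

theorem hyp1F1_contiguous (z : ℝ) :
    b * hyp1F1 a b z = b * hyp1F1 a (b + 1) z + z * deriv (hyp1F1 a (b + 1)) z := by
  have hc : IsEntireSeries (kummerCoeff a (b + 1)) := isEntireSeries_kummerCoeff a (by linarith)
  have hcoeff : (fun k : ℕ => b * kummerCoeff a b k)
      = fun k : ℕ => b * kummerCoeff a (b + 1) k + (k : ℝ) * kummerCoeff a (b + 1) k := by
    funext k
    linear_combination kummerCoeff_contiguous a hb k
  have hsum := congrArg (seriesSum · z) hcoeff
  rw [(hc.const_mul b).seriesSum_add hc.natCast_mul, hc.seriesSum_natCast_mul,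
    seriesSum_const_mul, seriesSum_const_mul] at hsum
  rw [deriv_hyp1F1 a (by linarith), hyp1F1_eq_seriesSum, hyp1F1_eq_seriesSum]
  exact hsum

theorem deriv_hyp1F1_contiguous (z : ℝ) :
    b * deriv (hyp1F1 a b) z = a * hyp1F1 a (b + 1) z + z * deriv (hyp1F1 a (b + 1)) z := by
  have hc : IsEntireSeries (kummerCoeff a (b + 1)) := isEntireSeries_kummerCoeff a (by linarith)
  have hcoeff : (fun k : ℕ => b * derivCoeff (kummerCoeff a b) k)
      = fun k : ℕ => a * kummerCoeff a (b + 1) k + (k : ℝ) * kummerCoeff a (b + 1) k := by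
    funext k
    linear_combination derivCoeff_kummerCoeff_contiguous a hb k
  have hsum := congrArg (seriesSum · z) hcoeff
  rw [(hc.const_mul a).seriesSum_add hc.natCast_mul, hc.seriesSum_natCast_mul,
    seriesSum_const_mul, seriesSum_const_mul] at hsum
  rw [deriv_hyp1F1 a hb, deriv_hyp1F1 a (by linarith), hyp1F1_eq_seriesSum]
  exact hsum

end Hyp1F1

theorem hasDerivAt_comp_neg_sq {f : ℝ → ℝ} {f' : ℝ} (x : ℝ)
    (hf : HasDerivAt f f' (-x ^ 2)) :
    HasDerivAt (fun y => f (-y ^ 2)) (-(2 * x) * f') x := by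
  have hsq : HasDerivAt (fun y : ℝ => -y ^ 2) (-(2 * x)) x := by
    simpa using (hasDerivAt_pow 2 x).fun_neg
  exact (hf.comp x hsq).congr_deriv (mul_comm _ _)

theorem deriv_comp_neg_sq {f : ℝ → ℝ} (hf : Differentiable ℝ f) :
    deriv (fun x => f (-x ^ 2)) = fun x => -(2 * x) * deriv f (-x ^ 2) :=
  funext fun x => (hasDerivAt_comp_neg_sq x (hf _).hasDerivAt).deriv

theorem deriv_deriv_comp_neg_sq {f : ℝ → ℝ} (hf : Differentiable ℝ f)
    (hf' : Differentiable ℝ (deriv f)) (x : ℝ) :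
    deriv (deriv fun x => f (-x ^ 2)) x
      = 4 * x ^ 2 * deriv (deriv f) (-x ^ 2) - 2 * deriv f (-x ^ 2) := by
  rw [deriv_comp_neg_sq hf]
  have hlin : HasDerivAt (fun x : ℝ => -(2 * x)) (-2) x := by
    simpa using ((hasDerivAt_id x).const_mul 2).fun_neg
  rw [(hlin.fun_mul (hasDerivAt_comp_neg_sq x (hf' _).hasDerivAt)).deriv]
  ring

theorem hyp1F1_radial_oscillator_general (l g : ℝ) (hgl : 1/2 < g + l)
    (ψp ψm : ℝ → ℝ)
    (hψp : ∀ x, ψp x = hyp1F1 (-l) (g + l + 1/2) (-x ^ 2))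
    (hψm : ∀ x, ψm x = hyp1F1 (-l) (g + l - 1/2) (-x ^ 2)) :
    (∀ x : ℝ, 0 < x →
      deriv (deriv ψp) x = 4 * l * ψp x - 2 * ((g + l) / x + x) * deriv ψp x) ∧
    (∀ x : ℝ, 0 < x →
      8 * l * ψp x * ψm x + (2 * (1 - 2 * g - 2 * l) / x) * ψp x * deriv ψm x
        - 4 * x * ψm x * deriv ψp x - 2 * deriv ψm x * deriv ψp x = 0) := by
  set b := g + l - 1/2 with hb_def
  have hb : 0 < b := by linarith
  have hb1 : 0 < b + 1 := by linarith
  obtain rfl : ψp = fun x => hyp1F1 (-l) (b + 1) (-x ^ 2) := by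
    funext x
    rw [hψp, show g + l + 1/2 = b + 1 by ring]
  obtain rfl : ψm = fun x => hyp1F1 (-l) b (-x ^ 2) := funext hψm
  have hF := differentiable_hyp1F1 (-l) hb1
  refine ⟨fun x hx => ?_, fun x hx => ?_⟩ <;> dsimp only
  · rw [deriv_deriv_comp_neg_sq hF (differentiable_deriv_hyp1F1 (-l) hb1), deriv_comp_neg_sq hF]
    have hK := hyp1F1_kummer_equation (-l) hb1 (-x ^ 2)
    field_simp
    linear_combination (-4) * hK + 4 * deriv (hyp1F1 (-l) (b + 1)) (-x ^ 2) * hb_def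
  · rw [deriv_comp_neg_sq hF, deriv_comp_neg_sq (differentiable_hyp1F1 (-l) hb)]
    have hA := hyp1F1_contiguous (-l) hb (-x ^ 2)
    have hB := deriv_hyp1F1_contiguous (-l) hb (-x ^ 2)
    set P := hyp1F1 (-l) (b + 1) (-x ^ 2)
    set P' := deriv (hyp1F1 (-l) (b + 1)) (-x ^ 2)
    set M := hyp1F1 (-l) b (-x ^ 2)
    set M' := deriv (hyp1F1 (-l) b) (-x ^ 2)
    have key : 8 * l * P * M + 8 * b * P * M' + 8 * x ^ 2 * M * P' - 8 * x ^ 2 * M' * P' = 0 := by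
      refine (mul_eq_zero.mp ?_).resolve_left hb.ne'
      linear_combination (8 * (l * P + x ^ 2 * P')) * hA + 8 * (b * P - x ^ 2 * P') * hB
    field_simp
    linear_combination key - 8 * P * M' * hb_def

/-- For the continuous-`l` extension of the radial oscillator, with
`ψp(x) = ₁F₁(-l; g+l+1/2; -x²)` and `ψm(x) = ₁F₁(-l; g+l-1/2; -x²)`:
the ODE `ψp'' = 4l ψp - 2((g+l)/x + x) ψp'` and the compatibility
identity (cc12RO) hold on `(0, ∞)`. -/
theorem hyp1F1_radial_oscillator (l g : ℝ) (hl : 0 < l) (hgl : 1/2 < g + l)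
    (ψp ψm : ℝ → ℝ)
    (hψp : ∀ x, ψp x = hyp1F1 (-l) (g + l + 1/2) (-x ^ 2))
    (hψm : ∀ x, ψm x = hyp1F1 (-l) (g + l - 1/2) (-x ^ 2)) :
    (∀ x : ℝ, 0 < x →
      deriv (deriv ψp) x = 4 * l * ψp x - 2 * ((g + l) / x + x) * deriv ψp x) ∧
    (∀ x : ℝ, 0 < x →
      8 * l * ψp x * ψm x + (2 * (1 - 2 * g - 2 * l) / x) * ψp x * deriv ψm x
        - 4 * x * ψm x * deriv ψp x - 2 * deriv ψm x * deriv ψp x = 0) :=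
  hyp1F1_radial_oscillator_general l g hgl ψp ψm hψp hψm
end

section
/- Let W0(·,a) satisfy the shape invariance condition with remainder R ∘ f, let W1m(x,a) = W1p(x,f(a)), and suppose the compatibility condition holds with ε(x) = 0 for all a. Then the potentials V(x,a) = W(x,a)² - ∂ₓW(x,a) and V0(x,a) = W0(x,a)² - ∂ₓW0(x,a) (with W = W0 + W1p - W1m) satisfy the same shape invariance relation with identical remainder R(f(a)); i.e., V(x,a) differs from its partner Ṽ(x,a) = W(x,a)² + ∂ₓW(x,a) evaluated at f(a) by the same constant R(f(a)) as in the classical pair: Ṽ(x,a) - V(x,f(a)) = R(f(a)) for all x, a, exactly as Ṽ0(x,a) - V0(x,f(a)) = R(f(a)). -/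
/-- Isospectrality (Remark 4): under shape invariance of `W0` and the
compatibility condition with `ε = 0`, the extended pair satisfies
`Ṽ(x,a) - V(x, f a) = R (f a)`, exactly as `Ṽ0(x,a) - V0(x, f a) = R (f a)`
for the classical pair. -/
theorem extended_pair_isospectrality
    {A : Type*} (I : Set ℝ) (hI : IsOpen I)
    (f : A → A) (R : A → ℝ) (W0 W1p : A → ℝ → ℝ)
    (h0 : ∀ a, ∀ x ∈ I, DifferentiableAt ℝ (W0 a) x)
    (hp : ∀ a, ∀ x ∈ I, DifferentiableAt ℝ (W1p a) x)
    (hsi0 : ∀ a, ∀ x ∈ I,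
      (W0 a x) ^ 2 - (W0 (f a) x) ^ 2 + deriv (W0 (f a)) x + deriv (W0 a) x = R (f a))
    (hcc : ∀ a, ∀ x ∈ I,
      (W1p a x) ^ 2 + deriv (W1p a) x + (W1p (f a) x) ^ 2 + deriv (W1p (f a)) x
        - 2 * W0 a x * W1p (f a) x + 2 * W0 a x * W1p a x
        - 2 * W1p (f a) x * W1p a x = 0) :
    (∀ a, ∀ x ∈ I,
      ((W0 a x + W1p a x - W1p (f a) x) ^ 2
          + deriv (fun y => W0 a y + W1p a y - W1p (f a) y) x)
        - ((W0 (f a) x + W1p (f a) x - W1p (f (f a)) x) ^ 2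
          - deriv (fun y => W0 (f a) y + W1p (f a) y - W1p (f (f a)) y) x)
        = R (f a)) ∧
    (∀ a, ∀ x ∈ I,
      ((W0 a x) ^ 2 + deriv (W0 a) x) - ((W0 (f a) x) ^ 2 - deriv (W0 (f a)) x)
        = R (f a)) := by

  have key : ∀ b : A, ∀ x ∈ I,
      deriv (fun y => W0 b y + W1p b y - W1p (f b) y) x
        = deriv (W0 b) x + deriv (W1p b) x - deriv (W1p (f b)) x := by
    intro b x hx
    have h1 := (h0 b x hx).hasDerivAt
    have h2 := (hp b x hx).hasDerivAt
    have h3 := (hp (f b) x hx).hasDerivAt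
    exact ((h1.add h2).sub h3).deriv
  constructor
  · intro a x hx
    rw [key a x hx, key (f a) x hx]
    have e1 := hcc a x hx
    have e2 := hcc (f a) x hx
    have e3 := hsi0 a x hx
    nlinarith [e1, e2, e3]
  · intro a x hx
    have := hsi0 a x hx
    linarith
end
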